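/- arXiv:2510.26330 — 4 statements merged into one kernel-verified Lean document; each statement's English description precedes it below -/
import Mathlib

section
/- For nonnegative integers a, b, the integral over the triangle T with vertices (0,0), (2,0), (1,1) of y^a · |T(x,y)|^b dx dy equals 2 · b! · (a+1)! / ((a+b+1) · (a+b+2)!), where |T(x,y)| = y(2-x-y)/(x+y). Equivalently this equals (2 / ((a+b+1)(a+b+2))) · binomial(a+b+1, b)^{-1}. -/
/-!
The substitution `(s, t) ↦ (t (2 - s), s t)` maps `[0, 1] × (0, 1]` bijectively onto the triangle
minus its vertex `(0, 0)`, with Jacobian `2 t`. In these coordinates `x + y = 2 t` and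
`|T(x, y)| = s (1 - t)`, so the integrand becomes `s ^ (a + b) · 2 t ^ (a + 1) (1 - t) ^ b`, and
the integral factors into two Beta integrals.
-/

open Real MeasureTheory

/-- The unit triangle with vertices A = (0,0), B = (2,0), C = (1,1). -/
def unitTriangle : Set (ℝ × ℝ) := {p | 0 ≤ p.2 ∧ p.2 ≤ p.1 ∧ p.2 ≤ 2 - p.1}

open Set
open scoped Nat

theorem integral_pow_mul_one_sub_pow (m n : ℕ) :
    ∫ t in (0 : ℝ)..1, t ^ m * (1 - t) ^ n = (m ! * n ! : ℝ) / (m + n + 1)! := by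
  induction n generalizing m with
  | zero => simp [Nat.factorial_succ, field]
  | succ n ih =>
    have hsplit : ∀ t : ℝ, t ^ m * (1 - t) ^ (n + 1) =
        t ^ m * (1 - t) ^ n - t ^ (m + 1) * (1 - t) ^ n := fun t ↦ by ring
    simp_rw [hsplit]
    rw [intervalIntegral.integral_sub ((by fun_prop : Continuous _).intervalIntegrable _ _)
      ((by fun_prop : Continuous _).intervalIntegrable _ _), ih, ih,
      show m + 1 + n + 1 = m + n + 1 + 1 by ring, show m + (n + 1) + 1 = m + n + 1 + 1 by ring]
    push_cast [Nat.factorial_succ]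
    field_simp
    ring

def unitTriangleParam (q : ℝ × ℝ) : ℝ × ℝ := (q.2 * (2 - q.1), q.1 * q.2)

def unitTriangleParamDeriv (q : ℝ × ℝ) : ℝ × ℝ →L[ℝ] ℝ × ℝ :=
  (q.2 • -ContinuousLinearMap.fst ℝ ℝ ℝ + (2 - q.1) • ContinuousLinearMap.snd ℝ ℝ ℝ).prod
    (q.1 • ContinuousLinearMap.snd ℝ ℝ ℝ + q.2 • ContinuousLinearMap.fst ℝ ℝ ℝ)

theorem hasFDerivAt_unitTriangleParam (q : ℝ × ℝ) :
    HasFDerivAt unitTriangleParam (unitTriangleParamDeriv q) q :=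
  (hasFDerivAt_snd.mul (hasFDerivAt_fst.const_sub 2)).prodMk (hasFDerivAt_fst.mul hasFDerivAt_snd)

theorem det_unitTriangleParamDeriv (q : ℝ × ℝ) :
    (unitTriangleParamDeriv q).det = -(2 * q.2) := by
  have h10 : unitTriangleParamDeriv q (1, 0) = (-q.2, q.2) := by simp [unitTriangleParamDeriv]
  have h01 : unitTriangleParamDeriv q (0, 1) = (2 - q.1, q.1) := by simp [unitTriangleParamDeriv]
  rw [ContinuousLinearMap.det, ← LinearMap.det_toMatrix (Module.Basis.finTwoProd ℝ),
    Matrix.det_fin_two]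
  simp only [LinearMap.toMatrix_apply, Module.Basis.finTwoProd_zero, Module.Basis.finTwoProd_one,
    Module.Basis.coe_finTwoProd_repr, ContinuousLinearMap.coe_coe, h10, h01, Matrix.cons_val_zero,
    Matrix.cons_val_one]
  ring

theorem injOn_unitTriangleParam : InjOn unitTriangleParam (Icc 0 1 ×ˢ Ioc 0 1) := by
  rintro ⟨s, t⟩ ⟨-, ht, -⟩ ⟨s', t'⟩ ⟨-, -, -⟩ h
  simp only [unitTriangleParam, Prod.mk.injEq] at h ⊢
  have ht' : t = t' := by linarith
  subst ht'
  exact ⟨mul_right_cancel₀ ht.ne' h.2, rfl⟩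

theorem image_unitTriangleParam :
    unitTriangleParam '' (Icc 0 1 ×ˢ Ioc 0 1) = unitTriangle \ {(0 : ℝ × ℝ)} := by
  ext ⟨x, y⟩
  simp only [mem_image, mem_prod, mem_Icc, mem_Ioc, unitTriangle, unitTriangleParam, mem_sdiff,
    mem_ofPred_eq, mem_singleton_iff, Prod.ext_iff, Prod.fst_zero, Prod.snd_zero, Prod.exists]
  constructor
  · rintro ⟨s, t, ⟨⟨hs0, hs1⟩, ht0, ht1⟩, rfl, rfl⟩
    refine ⟨⟨by positivity, by nlinarith, by nlinarith⟩, fun h ↦ ?_⟩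
    nlinarith [h.1]
  · rintro ⟨⟨hy0, hyx, hy2⟩, hne⟩
    have hxy : 0 < x + y := by
      by_contra! h
      exact hne ⟨by linarith, by linarith⟩
    refine ⟨2 * y / (x + y), (x + y) / 2,
      ⟨⟨by positivity, ?_⟩, by positivity, by linarith⟩, ?_, ?_⟩
    · rw [div_le_one hxy]; linarith
    · field_simp; ring
    · field_simp

theorem integral_unitTriangle_eq {E : Type*} [NormedAddCommGroup E] [NormedSpace ℝ E]
    (g : ℝ × ℝ → E) :
    ∫ p in unitTriangle, g p =
      ∫ q in Icc 0 1 ×ˢ Ioc 0 1, (2 * q.2) • g (unitTriangleParam q) := by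
  rw [← setIntegral_congr_set (sdiff_null_ae_eq_self (measure_singleton (0 : ℝ × ℝ))),
    ← image_unitTriangleParam,
    integral_image_eq_integral_abs_det_fderiv_smul volume
      (measurableSet_Icc.prod measurableSet_Ioc)
      (fun q _ ↦ (hasFDerivAt_unitTriangleParam q).hasFDerivWithinAt) injOn_unitTriangleParam]
  refine setIntegral_congr_fun (measurableSet_Icc.prod measurableSet_Ioc) fun q hq ↦ ?_
  rw [det_unitTriangleParamDeriv, abs_neg, abs_of_nonneg (by linarith [hq.2.1])]

theorem integral_unitTriangle_moment (a b : ℕ) :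
    ∫ p in unitTriangle, p.2 ^ a * (p.2 * (2 - p.1 - p.2) / (p.1 + p.2)) ^ b =
      2 * b ! * (a + 1)! / ((a + b + 1) * (a + b + 2)!) := by
  let g : ℝ × ℝ → ℝ := fun p ↦ p.2 ^ a * (p.2 * (2 - p.1 - p.2) / (p.1 + p.2)) ^ b
  have hsquare : MeasurableSet (Icc (0 : ℝ) 1 ×ˢ Ioc (0 : ℝ) 1) :=
    measurableSet_Icc.prod measurableSet_Ioc
  -- the factor `(1 - s) ^ 0` makes the `s`-integral a Beta integral as well
  have hpullback : ∀ q ∈ Icc (0 : ℝ) 1 ×ˢ Ioc 0 1, (2 * q.2) • g (unitTriangleParam q) =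
      q.1 ^ (a + b) * (1 - q.1) ^ 0 * (2 * (q.2 ^ (a + 1) * (1 - q.2) ^ b)) := by
    rintro ⟨s, t⟩ ⟨-, ht, -⟩
    have hT : s * t * (2 - t * (2 - s) - s * t) / (t * (2 - s) + s * t) = s * (1 - t) := by
      field_simp [ht.ne']
      ring
    simp only [g, unitTriangleParam, smul_eq_mul, hT, mul_pow]
    ring
  calc ∫ p in unitTriangle, g p
      = ∫ q in Icc 0 1 ×ˢ Ioc 0 1, (2 * q.2) • g (unitTriangleParam q) :=
        integral_unitTriangle_eq g
    _ = ∫ q in Icc 0 1 ×ˢ Ioc 0 1,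
          q.1 ^ (a + b) * (1 - q.1) ^ 0 * (2 * (q.2 ^ (a + 1) * (1 - q.2) ^ b)) :=
        setIntegral_congr_fun hsquare hpullback
    _ = (∫ s in (0 : ℝ)..1, s ^ (a + b) * (1 - s) ^ 0) *
          (2 * ∫ t in (0 : ℝ)..1, t ^ (a + 1) * (1 - t) ^ b) := by
      rw [Measure.volume_eq_prod, setIntegral_prod_mul (fun s ↦ s ^ (a + b) * (1 - s) ^ 0)
        fun t ↦ 2 * (t ^ (a + 1) * (1 - t) ^ b), integral_Icc_eq_integral_Ioc,
        ← intervalIntegral.integral_of_le zero_le_one,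
        ← intervalIntegral.integral_of_le zero_le_one, intervalIntegral.integral_const_mul]
    _ = 2 * b ! * (a + 1)! / ((a + b + 1) * (a + b + 2)!) := by
      rw [integral_pow_mul_one_sub_pow, integral_pow_mul_one_sub_pow,
        show a + 1 + b + 1 = a + b + 2 by ring]
      push_cast [Nat.factorial_succ]
      field_simp
      ring

theorem triangle_moment_integral (a b : ℕ) :
    (∫ p in unitTriangle, p.2 ^ a * (p.2 * (2 - p.1 - p.2) / (p.1 + p.2)) ^ b) =
        2 * (Nat.factorial b) * (Nat.factorial (a + 1)) /
          ((a + b + 1) * Nat.factorial (a + b + 2)) ∧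
    (∫ p in unitTriangle, p.2 ^ a * (p.2 * (2 - p.1 - p.2) / (p.1 + p.2)) ^ b) =
        2 / ((a + b + 1) * (a + b + 2)) * ((Nat.choose (a + b + 1) b : ℝ))⁻¹ := by
  refine ⟨integral_unitTriangle_moment a b, (integral_unitTriangle_moment a b).trans ?_⟩
  rw [show a + b + 1 = b + (a + 1) by ring, Nat.cast_add_choose,
    show b + (a + 1) = a + b + 1 by ring, show a + b + 2 = a + b + 1 + 1 by ring,
    Nat.factorial_succ (a + b + 1)]
  push_cast
  field_simp
  ring
end

section
/- The map r ↦ 2r·cosh(r)^{1/3}/sinh(r) is strictly decreasing on (0,∞). -/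
open Real Set

lemma aux_sinh_lt (x : ℝ) (hx : 0 < x) : Real.sinh x < x * Real.cosh x := by
  have h : StrictMonoOn (fun x : ℝ => x * Real.cosh x - Real.sinh x) (Set.Ici 0) := by
    apply strictMonoOn_of_deriv_pos (convex_Ici 0)
    · exact (continuous_id.mul Real.continuous_cosh).sub Real.continuous_sinh |>.continuousOn
    · intro y hy
      rw [interior_Ici] at hy
      have hd : HasDerivAt (fun x : ℝ => x * Real.cosh x - Real.sinh x)
          (1 * Real.cosh y + y * Real.sinh y - Real.cosh y) y :=
        ((hasDerivAt_id y).mul (Real.hasDerivAt_cosh y)).sub (Real.hasDerivAt_sinh y)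
      rw [hd.deriv]
      have hy' : 0 < y := hy
      have := Real.sinh_pos_iff.2 hy'
      nlinarith
  have := h (Set.self_mem_Ici) (Set.mem_Ici.2 hx.le) hx
  simpa using this

lemma aux_key (x : ℝ) (hx : 0 < x) :
    3 * Real.sinh x * Real.cosh x + x * Real.sinh x ^ 2 < 3 * x * Real.cosh x ^ 2 := by
  have h : StrictMonoOn
      (fun x : ℝ => 3 * x * Real.cosh x ^ 2 - x * Real.sinh x ^ 2 - 3 * Real.sinh x * Real.cosh x)
      (Set.Ici 0) := by
    apply strictMonoOn_of_deriv_pos (convex_Ici 0)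
    · fun_prop
    · intro y hy
      rw [interior_Ici] at hy
      have hd : HasDerivAt
          (fun x : ℝ => 3 * x * Real.cosh x ^ 2 - x * Real.sinh x ^ 2 - 3 * Real.sinh x * Real.cosh x)
          ((3 * 1) * Real.cosh y ^ 2 + (3 * y) * (2 * Real.cosh y ^ 1 * Real.sinh y)
            - (1 * Real.sinh y ^ 2 + y * (2 * Real.sinh y ^ 1 * Real.cosh y))
            - ((3 * Real.cosh y) * Real.cosh y + (3 * Real.sinh y) * Real.sinh y)) y := by
        exact ((((hasDerivAt_id y).const_mul 3).mul ((Real.hasDerivAt_cosh y).pow 2)).sub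
          ((hasDerivAt_id y).mul ((Real.hasDerivAt_sinh y).pow 2))).sub
          (((Real.hasDerivAt_sinh y).const_mul 3).mul (Real.hasDerivAt_cosh y))
      rw [hd.deriv]
      have hy' : 0 < y := hy
      have h1 := Real.sinh_pos_iff.2 hy'
      have h2 := aux_sinh_lt y hy
      have h3 := Real.cosh_sq y
      nlinarith
  have := h (Set.self_mem_Ici) (Set.mem_Ici.2 hx.le) hx
  simp only [Real.sinh_zero, Real.cosh_zero] at this
  nlinarith

theorem affine_length_strictAnti :
    StrictAntiOn (fun r : ℝ => 2 * r * Real.cosh r ^ ((1:ℝ)/3) / Real.sinh r)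
      (Set.Ioi 0) := by
  apply strictAntiOn_of_deriv_neg (convex_Ioi 0)
  · apply ContinuousOn.div
    · apply ContinuousOn.mul (by fun_prop)
      intro y hy
      exact (Real.continuousAt_rpow_const _ _ (Or.inl ((Real.cosh_pos y).ne'))).comp
        Real.continuous_cosh.continuousAt |>.continuousWithinAt
    · exact Real.continuous_sinh.continuousOn
    · intro y hy
      exact (Real.sinh_pos_iff.2 hy).ne'
  · intro x hx
    rw [interior_Ioi] at hx
    have hc : (0:ℝ) < Real.cosh x := Real.cosh_pos x
    have hs : (0:ℝ) < Real.sinh x := Real.sinh_pos_iff.2 hx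
    have hdN : HasDerivAt (fun r : ℝ => 2 * r * Real.cosh r ^ ((1:ℝ)/3))
        ((2 * 1) * Real.cosh x ^ ((1:ℝ)/3)
          + (2 * x) * (Real.sinh x * ((1:ℝ)/3) * Real.cosh x ^ ((1:ℝ)/3 - 1))) x := by
      have : HasDerivAt (fun r : ℝ => Real.cosh r ^ ((1:ℝ)/3))
          (Real.sinh x * ((1:ℝ)/3) * Real.cosh x ^ ((1:ℝ)/3 - 1)) x :=
        (Real.hasDerivAt_cosh x).rpow_const (Or.inl hc.ne')
      exact ((hasDerivAt_id x).const_mul 2).mul this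
    have hd : HasDerivAt (fun r : ℝ => 2 * r * Real.cosh r ^ ((1:ℝ)/3) / Real.sinh r)
        ((((2 * 1) * Real.cosh x ^ ((1:ℝ)/3)
          + (2 * x) * (Real.sinh x * ((1:ℝ)/3) * Real.cosh x ^ ((1:ℝ)/3 - 1))) * Real.sinh x
          - 2 * x * Real.cosh x ^ ((1:ℝ)/3) * Real.cosh x) / Real.sinh x ^ 2) x :=
      hdN.div (Real.hasDerivAt_sinh x) hs.ne'
    rw [hd.deriv]
    apply div_neg_of_neg_of_pos _ (by positivity)
    have hQ : (0:ℝ) < Real.cosh x ^ ((1:ℝ)/3 - 1) := Real.rpow_pos_of_pos hc _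
    have hPQ : Real.cosh x ^ ((1:ℝ)/3) = Real.cosh x ^ ((1:ℝ)/3 - 1) * Real.cosh x := by
      rw [← Real.rpow_add_one hc.ne']
      norm_num
    rw [hPQ]
    have hkey := aux_key x hx
    nlinarith [mul_pos hQ (sub_pos.2 hkey)]
end

section
/- For λ > 0 with r = r_λ solving sinh(2r)/(2r) = λ+1, and M*(t) = -t + sinh(2rt)/(2r), the value of θ(M*) := -log 2 + ∫_0^1 [(M*'(t)+2)log(2+M*'(t)) - M*'(t)log(M*'(t)) - 2log(t+M*(t))] dt equals β_λ := log(2e^2 r^2 tanh(r)^{-2(λ+1)}). -/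
/-! With `x = r t` one has `M*' = 2 sinh² x`, `2 + M*' = 2 cosh² x` and
`t + M* = sinh (2x) / (2r)`, so the integrand of `θ(M*)` collapses to
`2 log (2r) - 2 cosh (2x) log (tanh x)`. The function
`cosh² x · (tanh x log (tanh x)) - x = sinh (2x) / 2 · log (tanh x) - x` is a primitive of
`cosh (2x) log (tanh x)` on `x > 0`, and in this form it is visibly continuous at `0` (as
`y log y → 0`). Evaluating it at `x = r` and using `sinh (2r) = 2r(λ+1)` yields `β_λ`. -/

open Real intervalIntegral Set
open MeasureTheory (volume ae_of_all)

namespace Real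

theorem continuous_tanh : Continuous tanh := by
  simp only [funext tanh_eq_sinh_div_cosh]
  exact continuous_sinh.div continuous_cosh fun x => (cosh_pos x).ne'

theorem hasDerivAt_tanh (x : ℝ) : HasDerivAt tanh (1 / cosh x ^ 2) x := by
  have htanh : tanh = sinh / cosh := funext tanh_eq_sinh_div_cosh
  rw [htanh, ← cosh_sq_sub_sinh_sq x]
  exact ((hasDerivAt_sinh x).div (hasDerivAt_cosh x) (cosh_pos x).ne').congr_deriv (by ring)

theorem tanh_pos_of_pos {x : ℝ} (hx : 0 < x) : 0 < tanh x := by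
  rw [tanh_eq_sinh_div_cosh]
  exact div_pos (sinh_pos_iff.mpr hx) (cosh_pos x)

end Real

theorem continuous_cosh_sq_mul_mul_log_tanh :
    Continuous fun x => cosh x ^ 2 * (tanh x * log (tanh x)) - x :=
  ((continuous_cosh.pow 2).mul (continuous_mul_log.comp continuous_tanh)).sub continuous_id

theorem hasDerivAt_cosh_sq_mul_mul_log_tanh {x : ℝ} (hx : 0 < x) :
    HasDerivAt (fun x => cosh x ^ 2 * (tanh x * log (tanh x)) - x)
      (cosh (2 * x) * log (tanh x)) x := by
  have hcosh_sq := (hasDerivAt_cosh x).pow 2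
  have hmul_log := (hasDerivAt_mul_log (tanh_pos_of_pos hx).ne').comp x (hasDerivAt_tanh x)
  refine ((hcosh_sq.mul hmul_log).sub (hasDerivAt_id x)).congr_deriv ?_
  simp only [Function.comp_apply, Pi.pow_apply, cosh_two_mul, tanh_eq_sinh_div_cosh]
  have hc := (cosh_pos x).ne'
  field_simp
  linear_combination (-(cosh x * log (sinh x / cosh x))) * cosh_sq_sub_sinh_sq x

theorem intervalIntegrable_cosh_two_mul_mul_log_tanh {b : ℝ} (hb : 0 ≤ b) :
    IntervalIntegrable (fun x => cosh (2 * x) * log (tanh x)) volume 0 b := by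
  have hneg : IntervalIntegrable (fun x => -(cosh (2 * x) * log (tanh x))) volume 0 b := by
    refine intervalIntegrable_deriv_of_nonneg
      continuous_cosh_sq_mul_mul_log_tanh.neg.continuousOn (fun x hx => ?_) (fun x hx => ?_)
    · rw [min_eq_left hb] at hx
      exact (hasDerivAt_cosh_sq_mul_mul_log_tanh hx.1).neg
    · rw [min_eq_left hb] at hx
      have hlog : log (tanh x) ≤ 0 := log_nonpos (tanh_pos_of_pos hx.1).le (tanh_lt_one x).le
      nlinarith [cosh_pos (2 * x)]
  simpa only [Pi.neg_def, neg_neg] using hneg.neg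

theorem integral_cosh_two_mul_mul_log_tanh {b : ℝ} (hb : 0 ≤ b) :
    ∫ x in 0..b, cosh (2 * x) * log (tanh x) = sinh (2 * b) / 2 * log (tanh b) - b := by
  rw [integral_eq_sub_of_hasDerivAt_of_le hb continuous_cosh_sq_mul_mul_log_tanh.continuousOn
    (fun x hx => hasDerivAt_cosh_sq_mul_mul_log_tanh hx.1)
    (intervalIntegrable_cosh_two_mul_mul_log_tanh hb)]
  rw [sinh_two_mul, tanh_eq_sinh_div_cosh]
  have hc := (cosh_pos b).ne'
  simp only [tanh_zero, zero_mul, mul_zero, sub_zero]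
  field_simp

theorem theta_integrand_at_cosh_two_mul {x c : ℝ} (hx : 0 < x) (hc : 0 < c) :
    (cosh (2 * x) - 1 + 2) * log (2 + (cosh (2 * x) - 1))
        - (cosh (2 * x) - 1) * log (cosh (2 * x) - 1) - 2 * log (sinh (2 * x) / c) =
      2 * log c - 2 * (cosh (2 * x) * log (tanh x)) := by
  have hs : 0 < sinh x := sinh_pos_iff.mpr hx
  have hch : 0 < cosh x := cosh_pos x
  have hsq := cosh_sq_sub_sinh_sq x
  have hplus : 2 + (cosh (2 * x) - 1) = 2 * cosh x ^ 2 := by rw [cosh_two_mul]; linarith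
  have hminus : cosh (2 * x) - 1 = 2 * sinh x ^ 2 := by rw [cosh_two_mul]; linarith
  rw [add_comm (cosh (2 * x) - 1), hplus, hminus, sinh_two_mul, tanh_eq_sinh_div_cosh,
    cosh_two_mul, log_div (by positivity) hc.ne', log_div hs.ne' hch.ne',
    log_mul (by positivity) hch.ne', log_mul two_ne_zero hs.ne',
    log_mul two_ne_zero (by positivity), log_mul two_ne_zero (by positivity), log_pow, log_pow]
  push_cast
  linear_combination (2 * log 2 + 2 * log (cosh x) + 2 * log (sinh x)) * hsq

theorem deriv_neg_add_sinh_two_mul_div {r : ℝ} (hr : r ≠ 0) (t : ℝ) :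
    deriv (fun t => -t + sinh (2 * r * t) / (2 * r)) t = cosh (2 * (r * t)) - 1 := by
  have hM : HasDerivAt (fun t => -t + sinh (2 * r * t) / (2 * r))
      (-1 + cosh (2 * r * t) * (2 * r * 1) / (2 * r)) t :=
    (hasDerivAt_id t).neg.add ((((hasDerivAt_id t).const_mul (2 * r)).sinh).div_const (2 * r))
  rw [hM.deriv, mul_assoc]
  field_simp
  ring

theorem log_two_mul_exp_two_mul_sq_mul_tanh_rpow {r : ℝ} (hr : 0 < r) (a : ℝ) :
    log (2 * exp 2 * r ^ 2 * tanh r ^ a) = log 2 + 2 + 2 * log r + a * log (tanh r) := by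
  rw [log_mul (by positivity) (rpow_pos_of_pos (tanh_pos_of_pos hr) a).ne',
    log_mul (by positivity) (by positivity), log_mul two_ne_zero (exp_ne_zero 2),
    log_rpow (tanh_pos_of_pos hr), log_exp, log_pow]
  push_cast
  ring

theorem theta_of_optimizer_equals_beta_general (lam r : ℝ) (hr : 0 < r)
    (hrel : Real.sinh (2 * r) / (2 * r) = lam + 1) :
    let M : ℝ → ℝ := fun t => -t + Real.sinh (2 * r * t) / (2 * r);
    -Real.log 2 + (∫ t in (0:ℝ)..1,
        ((deriv M t + 2) * Real.log (2 + deriv M t)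
          - deriv M t * Real.log (deriv M t)
          - 2 * Real.log (t + M t))) =
      Real.log (2 * Real.exp 2 * r ^ 2 *
        Real.rpow (Real.tanh r) (-(2 * (lam + 1)))) := by
  intro M
  have hsum (t : ℝ) : t + M t = sinh (2 * (r * t)) / (2 * r) := by
    simp only [M, mul_assoc]
    ring
  set g : ℝ → ℝ := fun x => 2 * log (2 * r) - 2 * (cosh (2 * x) * log (tanh x)) with hg
  have hpt : ∀ t ∈ uIoc (0 : ℝ) 1,
      (deriv M t + 2) * log (2 + deriv M t) - deriv M t * log (deriv M t) - 2 * log (t + M t) =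
        g (r * t) := by
    intro t ht
    rw [uIoc_of_le zero_le_one] at ht
    rw [deriv_neg_add_sinh_two_mul_div hr.ne', hsum]
    exact theta_integrand_at_cosh_two_mul (mul_pos hr ht.1) (by positivity)
  rw [integral_congr_ae (ae_of_all _ hpt),
    integral_comp_mul_left _ hr.ne', mul_zero, mul_one, hg,
    integral_sub intervalIntegrable_const
      ((intervalIntegrable_cosh_two_mul_mul_log_tanh hr.le).const_mul 2),
    integral_const, integral_const_mul,
    integral_cosh_two_mul_mul_log_tanh hr.le]
  have hsinh : sinh (2 * r) = 2 * r * (lam + 1) := by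
    rw [div_eq_iff (by positivity)] at hrel
    linarith
  rw [show Real.rpow (tanh r) (-(2 * (lam + 1))) = tanh r ^ (-(2 * (lam + 1))) from rfl,
    log_two_mul_exp_two_mul_sq_mul_tanh_rpow hr,
    log_mul two_ne_zero hr.ne', hsinh, smul_eq_mul, smul_eq_mul]
  field_simp
  ring

theorem theta_of_optimizer_equals_beta (lam r : ℝ) (hlam : 0 < lam) (hr : 0 < r)
    (hrel : Real.sinh (2 * r) / (2 * r) = lam + 1) :
    let M : ℝ → ℝ := fun t => -t + Real.sinh (2 * r * t) / (2 * r);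
    -Real.log 2 + (∫ t in (0:ℝ)..1,
        ((deriv M t + 2) * Real.log (2 + deriv M t)
          - deriv M t * Real.log (deriv M t)
          - 2 * Real.log (t + M t))) =
      Real.log (2 * Real.exp 2 * r ^ 2 *
        Real.rpow (Real.tanh r) (-(2 * (lam + 1)))) :=
  theta_of_optimizer_equals_beta_general lam r hr hrel
end

section
/- For λ ≥ 0 let r_λ ≥ 0 solve sinh(2r_λ)/(2r_λ) = λ+1 (with r_0 = 0). Then as λ → 0⁺, r_λ = sqrt(3λ/2) + O(λ^{3/2}), and consequently the area A(H_λ) = r_λ·λ·cosh(r_λ)/sinh(r_λ)^3 converges to 2/3 as λ → 0⁺. -/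
/-! With `x = 2 r_λ` the defining equation reads `sinh x = x (1 + λ)`. Comparing the power series
termwise gives `x + x³/6 ≤ sinh x ≤ x + (x³/6) cosh x` for `x ≥ 0`, hence
`r_λ² ≤ 3λ/2 ≤ r_λ² cosh (2 r_λ)`. So `r_λ → 0` and `λ / r_λ² → 2/3`; together with
`cosh x - 1 ≤ (x²/2) cosh x` the gap `√(3λ/2) - r_λ` is at most `2 (3λ/2)^{3/2} cosh (2 r_λ)`.
Since `sinh r ~ r` and `cosh r → 1`, the area is asymptotically equivalent to `λ / r_λ²`. -/

open Real Filter Asymptotics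

open Topology

namespace Real

open scoped Nat in
lemma pow_add_div_factorial_le {x : ℝ} (hx : 0 ≤ x) (m k : ℕ) :
    x ^ (m + k) / (m + k)! ≤ x ^ k / k ! * (x ^ m / m !) := by
  rw [div_mul_div_comm, pow_add, mul_comm (x ^ m)]
  gcongr
  rw [add_comm m k]
  exact_mod_cast Nat.le_of_dvd (Nat.factorial_pos _) (Nat.factorial_mul_factorial_dvd_factorial_add k m)

lemma add_pow_three_div_six_le_sinh {x : ℝ} (hx : 0 ≤ x) : x + x ^ 3 / 6 ≤ sinh x := by
  have := sum_le_hasSum (Finset.range 2) (fun n _ ↦ by positivity) (hasSum_sinh x)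
  norm_num [Finset.sum_range_succ, Nat.factorial] at this
  exact this

lemma sinh_sub_self_le {x : ℝ} (hx : 0 ≤ x) : sinh x - x ≤ x ^ 3 / 6 * cosh x := by
  have htail := (hasSum_nat_add_iff' 1).2 (hasSum_sinh x)
  simp only [Finset.sum_range_one] at htail
  refine hasSum_le (fun n ↦ ?_) (by simpa using htail) ((hasSum_cosh x).mul_left _)
  simpa [mul_add, add_assoc, show (3 : ℕ).factorial = 6 from rfl] using
    pow_add_div_factorial_le hx (2 * n) 3

lemma cosh_sub_one_le {x : ℝ} (hx : 0 ≤ x) : cosh x - 1 ≤ x ^ 2 / 2 * cosh x := by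
  have htail := (hasSum_nat_add_iff' 1).2 (hasSum_cosh x)
  refine hasSum_le (fun n ↦ ?_) (by simpa using htail) ((hasSum_cosh x).mul_left _)
  simpa [mul_add] using pow_add_div_factorial_le hx (2 * n) 2

end Real

def SolvesSinhDivEq (r : ℝ → ℝ) : Prop :=
  ∀ l : ℝ, 0 < l → 0 < r l ∧ sinh (2 * r l) / (2 * r l) = l + 1

namespace SolvesSinhDivEq

variable {r : ℝ → ℝ} {l : ℝ}

lemma sinh_two_mul_eq (hr : SolvesSinhDivEq r) (hl : 0 < l) :
    sinh (2 * r l) = 2 * r l * (l + 1) := by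
  obtain ⟨hpos, heq⟩ := hr l hl
  rw [← heq, mul_div_cancel₀ _ (by positivity)]

lemma sq_le (hr : SolvesSinhDivEq r) (hl : 0 < l) : r l ^ 2 ≤ 3 * l / 2 := by
  have hpos := (hr l hl).1
  have h := add_pow_three_div_six_le_sinh (by positivity : 0 ≤ 2 * r l)
  rw [hr.sinh_two_mul_eq hl] at h
  refine le_of_mul_le_mul_left ?_ hpos
  nlinarith

lemma le_sq_mul_cosh (hr : SolvesSinhDivEq r) (hl : 0 < l) :
    3 * l / 2 ≤ r l ^ 2 * cosh (2 * r l) := by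
  have hpos := (hr l hl).1
  have h := sinh_sub_self_le (by positivity : 0 ≤ 2 * r l)
  rw [hr.sinh_two_mul_eq hl] at h
  refine le_of_mul_le_mul_left ?_ hpos
  nlinarith

lemma le_sqrt (hr : SolvesSinhDivEq r) (hl : 0 < l) : r l ≤ √(3 * l / 2) :=
  le_sqrt_of_sq_le (hr.sq_le hl)

lemma tendsto_zero (hr : SolvesSinhDivEq r) : Tendsto r (𝓝[>] 0) (𝓝 0) := by
  have hsqrt : Tendsto (fun l : ℝ ↦ √(3 * l / 2)) (𝓝[>] 0) (𝓝 0) := by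
    have : Continuous (fun l : ℝ ↦ √(3 * l / 2)) := by fun_prop
    simpa using this.continuousWithinAt.tendsto (x := 0) (s := Set.Ioi 0)
  refine tendsto_of_tendsto_of_tendsto_of_le_of_le' tendsto_const_nhds hsqrt ?_ ?_
  · filter_upwards [self_mem_nhdsWithin] with l hl using (hr l hl).1.le
  · filter_upwards [self_mem_nhdsWithin] with l hl using hr.le_sqrt hl

lemma tendsto_cosh_two_mul (hr : SolvesSinhDivEq r) :
    Tendsto (fun l ↦ cosh (2 * r l)) (𝓝[>] 0) (𝓝 1) := by
  simpa [Function.comp_def] using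
    (continuous_cosh.tendsto 0).comp (by simpa using hr.tendsto_zero.const_mul 2)

lemma tendsto_div_sq (hr : SolvesSinhDivEq r) :
    Tendsto (fun l ↦ l / r l ^ 2) (𝓝[>] 0) (𝓝 (2 / 3)) := by
  have hcosh : Tendsto (fun l ↦ 2 / 3 * cosh (2 * r l)) (𝓝[>] 0) (𝓝 (2 / 3)) := by
    simpa using hr.tendsto_cosh_two_mul.const_mul (2 / 3)
  refine tendsto_of_tendsto_of_tendsto_of_le_of_le' tendsto_const_nhds hcosh ?_ ?_
  · filter_upwards [self_mem_nhdsWithin] with l hl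
    have := (hr l hl).1
    rw [le_div_iff₀ (by positivity)]
    linarith [hr.sq_le hl]
  · filter_upwards [self_mem_nhdsWithin] with l hl
    have := (hr l hl).1
    rw [div_le_iff₀ (by positivity)]
    linarith [hr.le_sq_mul_cosh hl]

lemma sqrt_sub_le (hr : SolvesSinhDivEq r) (hl : 0 < l) :
    √(3 * l / 2) - r l ≤ 2 * √(3 * l / 2) ^ 3 * cosh (2 * r l) := by
  set s := √(3 * l / 2)
  have hs : 0 < s := sqrt_pos.2 (by positivity)
  have hs2 : s ^ 2 = 3 * l / 2 := sq_sqrt (by positivity)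
  have hpos := (hr l hl).1
  have hrs := hr.le_sqrt hl
  have hcosh := cosh_sub_one_le (by positivity : 0 ≤ 2 * r l)
  have hgap : s ^ 2 - r l ^ 2 ≤ 2 * r l ^ 4 * cosh (2 * r l) := by
    nlinarith [hr.le_sq_mul_cosh hl]
  refine le_of_mul_le_mul_right ?_ hs
  calc (s - r l) * s ≤ s ^ 2 - r l ^ 2 := by nlinarith
    _ ≤ 2 * r l ^ 4 * cosh (2 * r l) := hgap
    _ ≤ 2 * s ^ 4 * cosh (2 * r l) := by gcongr
    _ = 2 * s ^ 3 * cosh (2 * r l) * s := by ring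

lemma isBigO_sub_sqrt (hr : SolvesSinhDivEq r) :
    (fun l ↦ r l - √(3 * l / 2)) =O[𝓝[>] 0] (fun l ↦ l ^ ((3 : ℝ) / 2)) := by
  have hbound : (fun l ↦ r l - √(3 * l / 2)) =O[𝓝[>] 0]
      (fun l ↦ √(3 * l / 2) ^ 3 * cosh (2 * r l)) := by
    refine IsBigO.of_bound 2 ?_
    filter_upwards [self_mem_nhdsWithin] with l hl
    have := hr.sqrt_sub_le hl
    have := hr.le_sqrt hl
    rw [norm_of_nonpos (by linarith), norm_of_nonneg (by positivity)]
    linarith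
  have hsqrt : (fun l : ℝ ↦ √(3 * l / 2) ^ 3) =O[𝓝[>] 0] (fun l ↦ l ^ ((3 : ℝ) / 2)) := by
    refine ((isBigO_refl _ _).const_mul_left (√(3 / 2) ^ 3)).congr' ?_ EventuallyEq.rfl
    filter_upwards [self_mem_nhdsWithin] with l (hl : 0 < l)
    rw [show 3 * l / 2 = 3 / 2 * l by ring, sqrt_mul (by norm_num), mul_pow, sqrt_eq_rpow l,
      ← rpow_natCast (l ^ _), ← rpow_mul hl.le]
    norm_num
  simpa using hbound.trans (hsqrt.mul (hr.tendsto_cosh_two_mul.isBigO_one ℝ))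

lemma tendsto_area (hr : SolvesSinhDivEq r) :
    Tendsto (fun l ↦ r l * l * cosh (r l) / sinh (r l) ^ 3) (𝓝[>] 0) (𝓝 (2 / 3)) := by
  have hsinh : (fun l ↦ sinh (r l)) ~[𝓝[>] 0] r :=
    isEquivalent_sinh.comp_tendsto hr.tendsto_zero
  have hcosh : (fun l ↦ cosh (r l)) ~[𝓝[>] 0] (fun _ ↦ 1) :=
    (isEquivalent_const_iff_tendsto one_ne_zero).2
      (by simpa [Function.comp_def] using (continuous_cosh.tendsto 0).comp hr.tendsto_zero)
  have hequiv := ((IsEquivalent.refl (u := fun l ↦ r l * l)).mul hcosh).div (hsinh.pow 3)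
  refine (hequiv.symm.congr_left ?_).tendsto_nhds hr.tendsto_div_sq
  filter_upwards [self_mem_nhdsWithin] with l hl
  have := (hr l hl).1
  simp only [Pi.mul_apply, Pi.div_apply, Pi.pow_apply, mul_one]
  field_simp

end SolvesSinhDivEq

theorem r_lambda_asymptotics_and_area_limit_general (r : ℝ → ℝ)
    (hr : ∀ l : ℝ, 0 < l → 0 < r l ∧ Real.sinh (2 * r l) / (2 * r l) = l + 1) :
    (fun l : ℝ => r l - Real.sqrt (3 * l / 2)) =O[nhdsWithin 0 (Set.Ioi 0)]
      (fun l : ℝ => l ^ ((3:ℝ)/2)) ∧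
    Filter.Tendsto (fun l : ℝ => r l * l * Real.cosh (r l) / Real.sinh (r l) ^ 3)
      (nhdsWithin 0 (Set.Ioi 0)) (nhds (2/3)) :=
  ⟨SolvesSinhDivEq.isBigO_sub_sqrt hr, SolvesSinhDivEq.tendsto_area hr⟩

theorem r_lambda_asymptotics_and_area_limit (r : ℝ → ℝ)
    (hr : ∀ l : ℝ, 0 < l → 0 < r l ∧ Real.sinh (2 * r l) / (2 * r l) = l + 1)
    (hr0 : r 0 = 0) :
    (fun l : ℝ => r l - Real.sqrt (3 * l / 2)) =O[nhdsWithin 0 (Set.Ioi 0)]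
      (fun l : ℝ => l ^ ((3:ℝ)/2)) ∧
    Filter.Tendsto (fun l : ℝ => r l * l * Real.cosh (r l) / Real.sinh (r l) ^ 3)
      (nhdsWithin 0 (Set.Ioi 0)) (nhds (2/3)) :=
  r_lambda_asymptotics_and_area_limit_general r hr
end
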